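/- (Lyapunov inequality for the formation error.) Under the error dynamics ė = (A + B K₁) e − X B₀ u₀ + (B + ΔB) d + ΔA x + ΔB u₁ + (B + ΔB)(u₂ + u₃) − K₄ (μ̇₂/μ₂) e, with P symmetric positive definite solving Aᵀ P + P A − P B Bᵀ P + I = 0, K₁ = −Bᵀ P, matched uncertainties ΔA = B N(t), ΔB = B M(t) with ‖N(t)‖ ≤ N̄ and ‖M(t)‖ ≤ M̄ < 1, bounds ‖d(t)‖ ≤ d̄, ‖u₀(t)‖ ≤ ū, X B₀ = B F, and robust terms u₂ = −ρ₁ s/‖s‖ − ρ₂ ‖x‖ s/‖s‖ − ρ₃ ‖F‖ s/‖s‖ and u₃ = −ρ₄ (‖K₁ x‖ + ‖K₂ ξ‖ + ‖K₃ h̃‖ + K₄ ‖(μ̇₂/μ₂) B⁺ e‖) s/‖s‖ where s = Bᵀ P e ≠ 0, and with gains ρ₁ ≥ (1 + M̄) d̄/(1 − M̄), ρ₂ ≥ N̄/(1 − M̄), ρ₃ ≥ ū/(1 − M̄), ρ₄ ≥ M̄/(1 − M̄), the Lyapunov function V̄(t) = (1/2) e(t)ᵀ P e(t) satisfies V̄̇(t)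 ≤ −V̄(t)/λ_max(P) − 2 K₄ (μ̇₂(t)/μ₂(t)) V̄(t). -/

import Mathlib

/-!
Since `P` is symmetric, `d/dt (eᵀ P e / 2) = eᵀ P ė`. Along the closed loop `A - B Bᵀ P` the
Riccati equation gives `eᵀ P (A - B Bᵀ P) e = -(|e|² + |s|²)/2` with `s = Bᵀ P e`. All remaining
terms of `ė` except the time-scaling one are matched, i.e. of the form `B w`, so they contribute
only `s ⬝ w`. The robust controller makes this nonpositive: every disturbance is bounded by `|s|`
times a quantity that the switching gain `ρ (1 - M̄) |s|` dominates, the uncertainty `M` cancelling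
at most the fraction `M̄` of that gain. Finally `|e|² ≥ eᵀ P e / λ_max(P)`.
-/

open Matrix Set Filter
open scoped Matrix.Norms.L2Operator

/-- Euclidean norm of a finitely-indexed real vector. -/
noncomputable def vecEnorm {ι : Type*} [Fintype ι] (x : ι → ℝ) : ℝ :=
  ‖(EuclideanSpace.equiv ι ℝ).symm x‖

/-- The time-scaling function μ with parameters v, T and initial time t₀. -/
noncomputable def tsf (v T t₀ : ℝ) (t : ℝ) : ℝ :=
  if t < T + t₀ then T ^ v / (T + t₀ - t) ^ v else 1

section vecEnorm

variable {ι κ : Type*} [Fintype ι] [Fintype κ]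

lemma dotProduct_eq_inner (x y : ι → ℝ) :
    x ⬝ᵥ y = inner ℝ ((EuclideanSpace.equiv ι ℝ).symm x) ((EuclideanSpace.equiv ι ℝ).symm y) := by
  simp [PiLp.inner_apply, dotProduct, mul_comm]

lemma vecEnorm_nonneg (x : ι → ℝ) : 0 ≤ vecEnorm x := norm_nonneg _

lemma dotProduct_self_eq_vecEnorm_sq (x : ι → ℝ) : x ⬝ᵥ x = vecEnorm x ^ 2 := by
  rw [dotProduct_eq_inner, vecEnorm, real_inner_self_eq_norm_sq]

lemma abs_dotProduct_le_vecEnorm_mul (x y : ι → ℝ) : |x ⬝ᵥ y| ≤ vecEnorm x * vecEnorm y := by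
  rw [dotProduct_eq_inner]
  exact abs_real_inner_le_norm _ _

lemma vecEnorm_add_le (x y : ι → ℝ) : vecEnorm (x + y) ≤ vecEnorm x + vecEnorm y :=
  norm_add_le _ _

lemma vecEnorm_sub_le (x y : ι → ℝ) : vecEnorm (x - y) ≤ vecEnorm x + vecEnorm y :=
  norm_sub_le _ _

lemma vecEnorm_neg (x : ι → ℝ) : vecEnorm (-x) = vecEnorm x :=
  norm_neg _

lemma vecEnorm_smul (c : ℝ) (x : ι → ℝ) : vecEnorm (c • x) = |c| * vecEnorm x := by
  rw [vecEnorm, map_smul, norm_smul, Real.norm_eq_abs, vecEnorm]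

lemma vecEnorm_mulVec_le [DecidableEq κ] (M : Matrix ι κ ℝ) (x : κ → ℝ) :
    vecEnorm (M *ᵥ x) ≤ ‖M‖ * vecEnorm x :=
  M.l2_opNorm_mulVec _

lemma vecEnorm_mulVec_le_of_le [DecidableEq κ] {M : Matrix ι κ ℝ} {x : κ → ℝ} {a b : ℝ}
    (hM : ‖M‖ ≤ a) (hx : vecEnorm x ≤ b) : vecEnorm (M *ᵥ x) ≤ a * b :=
  (vecEnorm_mulVec_le M x).trans
    (mul_le_mul hM hx (vecEnorm_nonneg x) ((norm_nonneg M).trans hM))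

lemma dotProduct_le_of_vecEnorm_le {x y : ι → ℝ} {b : ℝ} (hy : vecEnorm y ≤ b) :
    x ⬝ᵥ y ≤ vecEnorm x * b :=
  (le_abs_self _).trans <| (abs_dotProduct_le_vecEnorm_mul x y).trans <|
    mul_le_mul_of_nonneg_left hy (vecEnorm_nonneg x)

-- Also at `x = 0`, where `0⁻¹ = 0`.
lemma dotProduct_inv_vecEnorm_smul_self (x : ι → ℝ) :
    x ⬝ᵥ ((vecEnorm x)⁻¹ • x) = vecEnorm x := by
  rw [dotProduct_smul, smul_eq_mul, dotProduct_self_eq_vecEnorm_sq, sq, ← mul_assoc,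
    inv_mul_mul_self]

end vecEnorm

section QuadraticForm

variable {ι κ : Type*} [Fintype ι] [Fintype κ]

lemma dotProduct_mulVec_eq_transpose_mulVec_dotProduct (u : ι → ℝ) (M : Matrix ι κ ℝ)
    (w : κ → ℝ) : u ⬝ᵥ (M *ᵥ w) = (Mᵀ *ᵥ u) ⬝ᵥ w := by
  rw [dotProduct_mulVec, ← mulVec_transpose]

lemma dotProduct_mulVec_mulVec_of_isSymm {P : Matrix ι ι ℝ} (hP : P.IsSymm) (B : Matrix ι κ ℝ)
    (e : ι → ℝ) (w : κ → ℝ) : e ⬝ᵥ (P *ᵥ (B *ᵥ w)) = (Bᵀ *ᵥ (P *ᵥ e)) ⬝ᵥ w := by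
  rw [mulVec_mulVec, dotProduct_mulVec_eq_transpose_mulVec_dotProduct, transpose_mul, hP.eq,
    mulVec_mulVec]

lemma riccati_dotProduct_mulVec_closedLoop [DecidableEq ι] {A P : Matrix ι ι ℝ}
    {B : Matrix ι κ ℝ} (hP : P.IsSymm) (hRic : Aᵀ * P + P * A - P * B * Bᵀ * P + 1 = 0)
    (e : ι → ℝ) (w : κ → ℝ) (c : ℝ) :
    e ⬝ᵥ (P *ᵥ ((A + B * -(Bᵀ * P)) *ᵥ e + B *ᵥ w - c • e))
      = -(1 / 2) * (e ⬝ᵥ e) - (1 / 2) * ((Bᵀ *ᵥ (P *ᵥ e)) ⬝ᵥ (Bᵀ *ᵥ (P *ᵥ e)))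
        + (Bᵀ *ᵥ (P *ᵥ e)) ⬝ᵥ w - c * (e ⬝ᵥ (P *ᵥ e)) := by
  have hAP : e ⬝ᵥ (Aᵀ *ᵥ (P *ᵥ e)) = e ⬝ᵥ (P *ᵥ (A *ᵥ e)) := by
    rw [dotProduct_mulVec_eq_transpose_mulVec_dotProduct, transpose_transpose, dotProduct_comm,
      dotProduct_mulVec_eq_transpose_mulVec_dotProduct e P, hP.eq]
  have hPB := dotProduct_mulVec_mulVec_of_isSymm hP B e
  have hquad : e ⬝ᵥ ((Aᵀ * P + P * A - P * B * Bᵀ * P + 1) *ᵥ e) = 0 := by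
    rw [hRic, zero_mulVec, dotProduct_zero]
  simp only [sub_mulVec, add_mulVec, one_mulVec, neg_mulVec, mulVec_neg, mulVec_add, mulVec_sub,
    mulVec_smul, dotProduct_sub, dotProduct_add, dotProduct_neg, dotProduct_smul, smul_eq_mul,
    ← mulVec_mulVec, hAP, hPB] at hquad ⊢
  linarith

end QuadraticForm

section Calculus

variable {ι : Type*} [Fintype ι] {f g : ℝ → ι → ℝ} {f' g' : ι → ℝ} {t : ℝ}

lemma HasDerivAt.dotProduct (hf : HasDerivAt f f' t) (hg : HasDerivAt g g' t) :
    HasDerivAt (fun τ => f τ ⬝ᵥ g τ) (f' ⬝ᵥ g t + f t ⬝ᵥ g') t := by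
  simp only [_root_.dotProduct, ← Finset.sum_add_distrib]
  exact HasDerivAt.fun_sum fun i _ => (hasDerivAt_pi.1 hf i).mul (hasDerivAt_pi.1 hg i)

lemma HasDerivAt.mulVec {κ : Type*} [Fintype κ] (M : Matrix κ ι ℝ) (hf : HasDerivAt f f' t) :
    HasDerivAt (fun τ => M *ᵥ f τ) (M *ᵥ f') t :=
  (Matrix.mulVecLin M).toContinuousLinearMap.hasFDerivAt.comp_hasDerivAt t hf

lemma HasDerivAt.dotProduct_mulVec_self {P : Matrix ι ι ℝ} (hP : P.IsSymm)
    (hf : HasDerivAt f f' t) :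
    HasDerivAt (fun τ => f τ ⬝ᵥ (P *ᵥ f τ)) (2 * (f t ⬝ᵥ (P *ᵥ f'))) t := by
  convert hf.dotProduct (hf.mulVec P) using 1
  rw [dotProduct_mulVec_eq_transpose_mulVec_dotProduct, hP.eq, dotProduct_comm]
  ring

end Calculus

open scoped MatrixOrder in
lemma Matrix.IsHermitian.dotProduct_mulVec_le_iSup_eigenvalues_mul {ι : Type*} [Fintype ι]
    [DecidableEq ι] {P : Matrix ι ι ℝ} (hP : P.IsHermitian) (u : ι → ℝ) :
    u ⬝ᵥ (P *ᵥ u) ≤ (⨆ i, hP.eigenvalues i) * (u ⬝ᵥ u) := by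
  have hle : P ≤ algebraMap ℝ _ (⨆ i, hP.eigenvalues i) := by
    refine le_algebraMap_of_spectrum_le (fun r hr => ?_) hP
    obtain ⟨i, rfl⟩ := hP.spectrum_real_eq_range_eigenvalues ▸ hr
    exact le_ciSup (Set.finite_range _).bddAbove i
  simpa [Algebra.algebraMap_eq_smul_one, sub_mulVec, smul_mulVec] using
    (Matrix.le_iff.1 hle).dotProduct_mulVec_nonneg u

lemma Matrix.PosSemidef.dotProduct_mulVec_div_iSup_eigenvalues_le {ι : Type*} [Fintype ι]
    [DecidableEq ι] {P : Matrix ι ι ℝ} (hP : P.PosSemidef) (u : ι → ℝ) :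
    u ⬝ᵥ (P *ᵥ u) / (⨆ i, hP.1.eigenvalues i) ≤ u ⬝ᵥ u := by
  rcases (Real.iSup_nonneg hP.eigenvalues_nonneg).eq_or_lt with h | h
  · rw [← h, div_zero]
    exact dotProduct_star_self_nonneg u
  · rw [div_le_iff₀ h, mul_comm]
    exact hP.1.dotProduct_mulVec_le_iSup_eigenvalues_mul u

lemma dotProduct_switching_le {κ : Type*} [Fintype κ] [DecidableEq κ] (s : κ → ℝ)
    (M : Matrix κ κ ℝ) {ρ Mbar : ℝ} (hρ : 0 ≤ ρ) (hM : ‖M‖ ≤ Mbar) :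
    s ⬝ᵥ (-(ρ * (vecEnorm s)⁻¹) • s + M *ᵥ (-(ρ * (vecEnorm s)⁻¹) • s))
      ≤ -(ρ * (1 - Mbar) * vecEnorm s) := by
  have hMs : -(vecEnorm s * (Mbar * vecEnorm s)) ≤ s ⬝ᵥ (M *ᵥ s) :=
    neg_le_of_abs_le <| (abs_dotProduct_le_vecEnorm_mul s _).trans <|
      mul_le_mul_of_nonneg_left (vecEnorm_mulVec_le_of_le hM le_rfl) (vecEnorm_nonneg s)
  calc s ⬝ᵥ (-(ρ * (vecEnorm s)⁻¹) • s + M *ᵥ (-(ρ * (vecEnorm s)⁻¹) • s))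
      = -ρ * (s ⬝ᵥ ((vecEnorm s)⁻¹ • s)) - ρ * (vecEnorm s)⁻¹ * (s ⬝ᵥ (M *ᵥ s)) := by
        simp only [mulVec_smul, dotProduct_add, dotProduct_smul, smul_eq_mul]; ring
    _ ≤ -ρ * vecEnorm s + ρ * (vecEnorm s)⁻¹ * (vecEnorm s * (Mbar * vecEnorm s)) := by
        rw [dotProduct_inv_vecEnorm_smul_self]
        have := mul_le_mul_of_nonneg_left hMs (mul_nonneg hρ (inv_nonneg.2 (vecEnorm_nonneg s)))
        linarith
    _ = -(ρ * (1 - Mbar) * vecEnorm s) := by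
        rw [show ρ * (vecEnorm s)⁻¹ * (vecEnorm s * (Mbar * vecEnorm s))
          = ρ * Mbar * ((vecEnorm s)⁻¹ * vecEnorm s * vecEnorm s) by ring, inv_mul_mul_self]
        ring

lemma dotProduct_robust_control_nonpos {ι κ μ : Type*} [Fintype ι] [Fintype κ] [Fintype μ]
    [DecidableEq ι] [DecidableEq κ] [DecidableEq μ]
    (s : κ → ℝ) (F : Matrix κ μ ℝ) (N : Matrix κ ι ℝ) (M : Matrix κ κ ℝ)
    (u₀ : μ → ℝ) (d u₁ : κ → ℝ) (x : ι → ℝ)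
    {Nbar Mbar dbar ubar W ρ₁ ρ₂ ρ₃ ρ₄ : ℝ} (hMbar : Mbar < 1)
    (hN : ‖N‖ ≤ Nbar) (hM : ‖M‖ ≤ Mbar) (hd : vecEnorm d ≤ dbar) (hu₀ : vecEnorm u₀ ≤ ubar)
    (hu₁ : vecEnorm u₁ ≤ W)
    (hρ₁ : (1 + Mbar) * dbar / (1 - Mbar) ≤ ρ₁) (hρ₂ : Nbar / (1 - Mbar) ≤ ρ₂)
    (hρ₃ : ubar / (1 - Mbar) ≤ ρ₃) (hρ₄ : Mbar / (1 - Mbar) ≤ ρ₄)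
    {w : κ → ℝ} (hw : w = -((ρ₁ + ρ₂ * vecEnorm x + ρ₃ * ‖F‖ + ρ₄ * W) * (vecEnorm s)⁻¹) • s) :
    s ⬝ᵥ (-(F *ᵥ u₀) + (d + M *ᵥ d) + N *ᵥ x + M *ᵥ u₁ + (w + M *ᵥ w)) ≤ 0 := by
  set ρ := ρ₁ + ρ₂ * vecEnorm x + ρ₃ * ‖F‖ + ρ₄ * W
  set bound := (1 + Mbar) * dbar + Nbar * vecEnorm x + ubar * ‖F‖ + Mbar * W
  have hk : 0 < 1 - Mbar := sub_pos.2 hMbar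
  have hperturb : vecEnorm (-(F *ᵥ u₀) + (d + M *ᵥ d) + N *ᵥ x + M *ᵥ u₁) ≤ bound := by
    have := vecEnorm_mulVec_le_of_le (le_refl ‖F‖) hu₀
    have := vecEnorm_mulVec_le_of_le hM hd
    have := vecEnorm_mulVec_le_of_le hN (le_refl (vecEnorm x))
    have := vecEnorm_mulVec_le_of_le hM hu₁
    have := vecEnorm_add_le (-(F *ᵥ u₀) + (d + M *ᵥ d) + N *ᵥ x) (M *ᵥ u₁)
    have := vecEnorm_add_le (-(F *ᵥ u₀) + (d + M *ᵥ d)) (N *ᵥ x)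
    have := vecEnorm_add_le (-(F *ᵥ u₀)) (d + M *ᵥ d)
    have := vecEnorm_add_le d (M *ᵥ d)
    rw [vecEnorm_neg] at *
    linarith
  have hgain : bound ≤ ρ * (1 - Mbar) := by
    have := (div_le_iff₀ hk).1 hρ₁
    have := mul_le_mul_of_nonneg_right ((div_le_iff₀ hk).1 hρ₂) (vecEnorm_nonneg x)
    have := mul_le_mul_of_nonneg_right ((div_le_iff₀ hk).1 hρ₃) (norm_nonneg F)
    have := mul_le_mul_of_nonneg_right ((div_le_iff₀ hk).1 hρ₄) ((vecEnorm_nonneg u₁).trans hu₁)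
    linarith
  have hρ : 0 ≤ ρ := by
    have : 0 ≤ bound := (vecEnorm_nonneg _).trans hperturb
    exact le_of_mul_le_mul_right (by linarith) hk
  have hswitch := hw ▸ dotProduct_switching_le s M hρ hM
  have hdisturb := dotProduct_le_of_vecEnorm_le (x := s) hperturb
  have := mul_le_mul_of_nonneg_left hgain (vecEnorm_nonneg s)
  rw [dotProduct_add]
  linarith

theorem formation_error_lyapunov_inequality_general
    (n m n₀ m₀ nh : ℕ)
    (A : Matrix (Fin n) (Fin n) ℝ) (B : Matrix (Fin n) (Fin m) ℝ)
    (ΔA : ℝ → Matrix (Fin n) (Fin n) ℝ) (ΔB : ℝ → Matrix (Fin n) (Fin m) ℝ)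
    (Nmat : ℝ → Matrix (Fin m) (Fin n) ℝ) (Mmat : ℝ → Matrix (Fin m) (Fin m) ℝ)
    (hΔA : ∀ τ, ΔA τ = B * Nmat τ) (hΔB : ∀ τ, ΔB τ = B * Mmat τ)
    (Nbar Mbar dbar ubar : ℝ) (hMbar1 : Mbar < 1)
    (hNb : ∀ τ, ‖Nmat τ‖ ≤ Nbar) (hMb : ∀ τ, ‖Mmat τ‖ ≤ Mbar)
    (B₀ : Matrix (Fin n₀) (Fin m₀) ℝ)
    (X : Matrix (Fin n) (Fin n₀) ℝ)
    (F : Matrix (Fin m) (Fin m₀) ℝ) (hF : X * B₀ = B * F)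
    (Bp : Matrix (Fin m) (Fin n) ℝ)
    -- Riccati equation and gain matrices
    (P : Matrix (Fin n) (Fin n) ℝ) (hP : P.PosDef)
    (hRic : Aᵀ * P + P * A - P * B * Bᵀ * P + 1 = 0)
    (K₁ : Matrix (Fin m) (Fin n) ℝ) (hK₁ : K₁ = -(Bᵀ * P))
    (K₂ : Matrix (Fin m) (Fin n₀) ℝ)
    (K₃ : Matrix (Fin m) (Fin nh) ℝ)
    (K₄ : ℝ) (hK₄ : 0 < K₄)
    -- robust gains
    (ρ₁ ρ₂ ρ₃ ρ₄ : ℝ)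
    (hρ₁ : (1 + Mbar) * dbar / (1 - Mbar) ≤ ρ₁)
    (hρ₂ : Nbar / (1 - Mbar) ≤ ρ₂)
    (hρ₃ : ubar / (1 - Mbar) ≤ ρ₃)
    (hρ₄ : Mbar / (1 - Mbar) ≤ ρ₄)
    -- time-scaling function parameters (μ₂ = tsf v T₂ T₁)
    (v T₁ T₂ : ℝ)
    -- signals and their bounds
    (x : ℝ → Fin n → ℝ) (z : ℝ → Fin nh → ℝ)
    (u₀ : ℝ → Fin m₀ → ℝ) (d : ℝ → Fin m → ℝ)
    (hdb : ∀ τ, vecEnorm (d τ) ≤ dbar) (hub : ∀ τ, vecEnorm (u₀ τ) ≤ ubar)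
    (ξ : ℝ → Fin n₀ → ℝ)
    (e : ℝ → Fin n → ℝ)
    -- the controller at time t, with s = Bᵀ P e(t) ≠ 0
    (t : ℝ) (s : Fin m → ℝ) (hs : s = Bᵀ *ᵥ (P *ᵥ e t))
    (u₁t u₂t u₃t : Fin m → ℝ)
    (hu₁ : u₁t = K₁ *ᵥ x t + K₂ *ᵥ ξ t + K₃ *ᵥ z t
        - (K₄ * (deriv (tsf v T₂ T₁) t / tsf v T₂ T₁ t)) • (Bp *ᵥ e t))
    (hu₂ : u₂t = -ρ₁ • ((vecEnorm s)⁻¹ • s) - (ρ₂ * vecEnorm (x t)) • ((vecEnorm s)⁻¹ • s)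
        - (ρ₃ * ‖F‖) • ((vecEnorm s)⁻¹ • s))
    (hu₃ : u₃t = -(ρ₄ * (vecEnorm (K₁ *ᵥ x t) + vecEnorm (K₂ *ᵥ ξ t) + vecEnorm (K₃ *ᵥ z t)
        + K₄ * vecEnorm ((deriv (tsf v T₂ T₁) t / tsf v T₂ T₁ t) • (Bp *ᵥ e t))))
          • ((vecEnorm s)⁻¹ • s))
    -- the error dynamics at time t
    (hedyn : HasDerivAt e
      ((A + B * K₁) *ᵥ e t - (X * B₀) *ᵥ u₀ t + (B + ΔB t) *ᵥ d t
        + ΔA t *ᵥ x t + ΔB t *ᵥ u₁t + (B + ΔB t) *ᵥ (u₂t + u₃t)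
        - (K₄ * (deriv (tsf v T₂ T₁) t / tsf v T₂ T₁ t)) • e t) t) :
    deriv (fun τ => (1 / 2) * (e τ ⬝ᵥ (P *ᵥ e τ))) t
      ≤ -((1 / 2) * (e t ⬝ᵥ (P *ᵥ e t))) / (⨆ j, hP.1.eigenvalues j)
        - 2 * K₄ * (deriv (tsf v T₂ T₁) t / tsf v T₂ T₁ t)
            * ((1 / 2) * (e t ⬝ᵥ (P *ᵥ e t))) := by
  set r := deriv (tsf v T₂ T₁) t / tsf v T₂ T₁ t
  set W := vecEnorm (K₁ *ᵥ x t) + vecEnorm (K₂ *ᵥ ξ t) + vecEnorm (K₃ *ᵥ z t)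
    + K₄ * vecEnorm (r • (Bp *ᵥ e t))
  have hsymm : P.IsSymm := isHermitian_iff_isSymm.1 hP.1
  have hu₁W : vecEnorm u₁t ≤ W := by
    have hscale : vecEnorm ((K₄ * r) • (Bp *ᵥ e t)) = K₄ * vecEnorm (r • (Bp *ᵥ e t)) := by
      rw [mul_smul, vecEnorm_smul, abs_of_pos hK₄]
    rw [hu₁]
    have := vecEnorm_sub_le (K₁ *ᵥ x t + K₂ *ᵥ ξ t + K₃ *ᵥ z t) ((K₄ * r) • (Bp *ᵥ e t))
    have := vecEnorm_add_le (K₁ *ᵥ x t + K₂ *ᵥ ξ t) (K₃ *ᵥ z t)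
    have := vecEnorm_add_le (K₁ *ᵥ x t) (K₂ *ᵥ ξ t)
    linarith
  have hswitch : u₂t + u₃t
      = -((ρ₁ + ρ₂ * vecEnorm (x t) + ρ₃ * ‖F‖ + ρ₄ * W) * (vecEnorm s)⁻¹) • s := by
    rw [hu₂, hu₃]
    module
  have hrobust := dotProduct_robust_control_nonpos s F (Nmat t) (Mmat t) (u₀ t) (d t) u₁t (x t)
    hMbar1 (hNb t) (hMb t) (hdb t) (hub t) hu₁W hρ₁ hρ₂ hρ₃ hρ₄ hswitch
  subst hK₁
  set u := u₂t + u₃t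
  have hmatched : (A + B * -(Bᵀ * P)) *ᵥ e t - (X * B₀) *ᵥ u₀ t + (B + ΔB t) *ᵥ d t
        + ΔA t *ᵥ x t + ΔB t *ᵥ u₁t + (B + ΔB t) *ᵥ u - (K₄ * r) • e t
      = (A + B * -(Bᵀ * P)) *ᵥ e t + B *ᵥ (-(F *ᵥ u₀ t) + (d t + Mmat t *ᵥ d t)
        + Nmat t *ᵥ x t + Mmat t *ᵥ u₁t + (u + Mmat t *ᵥ u)) - (K₄ * r) • e t := by
    simp only [hΔA, hΔB, hF, add_mulVec, ← mulVec_mulVec, mulVec_add, mulVec_neg]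
    abel
  rw [hmatched] at hedyn
  rw [((hedyn.dotProduct_mulVec_self hsymm).const_mul (1 / 2 : ℝ)).deriv,
    riccati_dotProduct_mulVec_closedLoop hsymm hRic, ← hs, neg_div, mul_div_assoc]
  have hray := hP.posSemidef.dotProduct_mulVec_div_iSup_eigenvalues_le (e t)
  have hss : 0 ≤ s ⬝ᵥ s := dotProduct_star_self_nonneg s
  linarith

/-- Lyapunov inequality for the formation error: under the error dynamics with the robust
controller and the stated gain conditions, V̄(t) = ½ e(t)ᵀ P e(t) satisfies
V̄̇(t) ≤ −V̄(t)/λ_max(P) − 2K₄(μ̇₂/μ₂)V̄(t). -/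
theorem formation_error_lyapunov_inequality
    (n m n₀ m₀ nh : ℕ) (hn : 0 < n)
    (A : Matrix (Fin n) (Fin n) ℝ) (B : Matrix (Fin n) (Fin m) ℝ)
    (ΔA : ℝ → Matrix (Fin n) (Fin n) ℝ) (ΔB : ℝ → Matrix (Fin n) (Fin m) ℝ)
    (Nmat : ℝ → Matrix (Fin m) (Fin n) ℝ) (Mmat : ℝ → Matrix (Fin m) (Fin m) ℝ)
    (hΔA : ∀ τ, ΔA τ = B * Nmat τ) (hΔB : ∀ τ, ΔB τ = B * Mmat τ)
    (Nbar Mbar dbar ubar : ℝ) (hMbar0 : 0 ≤ Mbar) (hMbar1 : Mbar < 1)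
    (hNb : ∀ τ, ‖Nmat τ‖ ≤ Nbar) (hMb : ∀ τ, ‖Mmat τ‖ ≤ Mbar)
    (A₀ : Matrix (Fin n₀) (Fin n₀) ℝ) (B₀ : Matrix (Fin n₀) (Fin m₀) ℝ)
    (Ah : Matrix (Fin nh) (Fin nh) ℝ)
    (X : Matrix (Fin n) (Fin n₀) ℝ) (U : Matrix (Fin m) (Fin n₀) ℝ)
    (hreg : X * A₀ = A * X + B * U)
    (Xh : Matrix (Fin n) (Fin nh) ℝ) (Uh : Matrix (Fin m) (Fin nh) ℝ)
    (hregh : Xh * Ah = A * Xh + B * Uh)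
    (F : Matrix (Fin m) (Fin m₀) ℝ) (hF : X * B₀ = B * F)
    (Bp : Matrix (Fin m) (Fin n) ℝ) (hBp : B * Bp = 1)
    -- Riccati equation and gain matrices
    (P : Matrix (Fin n) (Fin n) ℝ) (hP : P.PosDef)
    (hRic : Aᵀ * P + P * A - P * B * Bᵀ * P + 1 = 0)
    (K₁ : Matrix (Fin m) (Fin n) ℝ) (hK₁ : K₁ = -(Bᵀ * P))
    (K₂ : Matrix (Fin m) (Fin n₀) ℝ) (hK₂ : K₂ = U - K₁ * X)
    (K₃ : Matrix (Fin m) (Fin nh) ℝ) (hK₃ : K₃ = Uh - K₁ * Xh)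
    (K₄ : ℝ) (hK₄ : 0 < K₄)
    -- robust gains
    (ρ₁ ρ₂ ρ₃ ρ₄ : ℝ)
    (hρ₁ : (1 + Mbar) * dbar / (1 - Mbar) ≤ ρ₁)
    (hρ₂ : Nbar / (1 - Mbar) ≤ ρ₂)
    (hρ₃ : ubar / (1 - Mbar) ≤ ρ₃)
    (hρ₄ : Mbar / (1 - Mbar) ≤ ρ₄)
    -- time-scaling function parameters (μ₂ = tsf v T₂ T₁)
    (v T₁ T₂ : ℝ) (hv : 2 < v) (hT₂ : 0 < T₂)
    -- signals and their bounds
    (x : ℝ → Fin n → ℝ) (x₀ : ℝ → Fin n₀ → ℝ) (z : ℝ → Fin nh → ℝ)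
    (u₀ : ℝ → Fin m₀ → ℝ) (d : ℝ → Fin m → ℝ)
    (hdb : ∀ τ, vecEnorm (d τ) ≤ dbar) (hub : ∀ τ, vecEnorm (u₀ τ) ≤ ubar)
    (ξ : ℝ → Fin n₀ → ℝ) (hξ : ξ = x₀)
    (e : ℝ → Fin n → ℝ) (he : ∀ τ, e τ = x τ - X *ᵥ x₀ τ - Xh *ᵥ z τ)
    -- the controller at time t, with s = Bᵀ P e(t) ≠ 0
    (t : ℝ) (s : Fin m → ℝ) (hs : s = Bᵀ *ᵥ (P *ᵥ e t)) (hs0 : s ≠ 0)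
    (u₁t u₂t u₃t : Fin m → ℝ)
    (hu₁ : u₁t = K₁ *ᵥ x t + K₂ *ᵥ ξ t + K₃ *ᵥ z t
        - (K₄ * (deriv (tsf v T₂ T₁) t / tsf v T₂ T₁ t)) • (Bp *ᵥ e t))
    (hu₂ : u₂t = -ρ₁ • ((vecEnorm s)⁻¹ • s) - (ρ₂ * vecEnorm (x t)) • ((vecEnorm s)⁻¹ • s)
        - (ρ₃ * ‖F‖) • ((vecEnorm s)⁻¹ • s))
    (hu₃ : u₃t = -(ρ₄ * (vecEnorm (K₁ *ᵥ x t) + vecEnorm (K₂ *ᵥ ξ t) + vecEnorm (K₃ *ᵥ z t)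
        + K₄ * vecEnorm ((deriv (tsf v T₂ T₁) t / tsf v T₂ T₁ t) • (Bp *ᵥ e t))))
          • ((vecEnorm s)⁻¹ • s))
    -- the error dynamics at time t
    (hedyn : HasDerivAt e
      ((A + B * K₁) *ᵥ e t - (X * B₀) *ᵥ u₀ t + (B + ΔB t) *ᵥ d t
        + ΔA t *ᵥ x t + ΔB t *ᵥ u₁t + (B + ΔB t) *ᵥ (u₂t + u₃t)
        - (K₄ * (deriv (tsf v T₂ T₁) t / tsf v T₂ T₁ t)) • e t) t) :
    deriv (fun τ => (1 / 2) * (e τ ⬝ᵥ (P *ᵥ e τ))) t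
      ≤ -((1 / 2) * (e t ⬝ᵥ (P *ᵥ e t))) / (⨆ j, hP.1.eigenvalues j)
        - 2 * K₄ * (deriv (tsf v T₂ T₁) t / tsf v T₂ T₁ t)
            * ((1 / 2) * (e t ⬝ᵥ (P *ᵥ e t))) :=
  formation_error_lyapunov_inequality_general n m n₀ m₀ nh A B ΔA ΔB Nmat Mmat hΔA hΔB Nbar Mbar
    dbar ubar hMbar1 hNb hMb B₀ X F hF Bp P hP hRic K₁ hK₁ K₂ K₃ K₄ hK₄ ρ₁ ρ₂ ρ₃ ρ₄ hρ₁ hρ₂ hρ₃ hρ₄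
    v T₁ T₂ x z u₀ d hdb hub ξ e t s hs u₁t u₂t u₃t hu₁ hu₂ hu₃ hedyn
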